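/- Let R be a balanced nonnegative block upper triangular matrix in increasing order satisfying assumption (A). Then no diagonal block other than the last has character 1; equivalently, the only block with Perron–Frobenius eigenvalue 1 is the final block Q_{K+1}, which forms the last cluster by itself. -/

import Mathlib

/-!
Every diagonal block is substochastic, so by Gershgorin its character is at most `1`. The last
block receives no mass from outside, hence is stochastic and has character `1`. Conversely, if
an irreducible substochastic block has eigenvalue `1`, the modulus of an eigenvector is a
subinvariant vector which, by irreducibility, is constant at its maximum; so the block is
stochastic and its rows put no mass outside it. A block `k ≠ K+1` of character `1` is then
leading, and so is the next leading block `ι (j+1)`, with the same character. Assumption (A)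
gives an entry from some block in `[k, ι (j+1))` into `ι (j+1)`, while by condition (2) every
block strictly between them is fed from an earlier block of `[k, ι (j+1))`. Following these
entries backwards ends in an entry leaving block `k`, which is impossible.
-/

open Matrix Finset

theorem sum_subtype_eq_sum_iff_of_nonneg {ι M : Type*} [Fintype ι] [AddCommMonoid M]
    [PartialOrder M] [IsOrderedCancelAddMonoid M] {r : ι → M} (hr : 0 ≤ r)
    (s : ι → Prop) [DecidablePred s] :
    ∑ j : Subtype s, r j = ∑ j, r j ↔ ∀ j, ¬ s j → r j = 0 := by
  rw [← Fintype.sum_subtype_add_sum_subtype s r, left_eq_add,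
    Fintype.sum_eq_zero_iff_of_nonneg (f := fun j : {j // ¬ s j} => r j) fun j => hr j]
  simp [funext_iff]

namespace Matrix

section Nonneg

variable {n : Type*} [Fintype n] {A : Matrix n n ℝ}

theorem mulVec_mono (hA : ∀ i j, 0 ≤ A i j) {u v : n → ℝ} (huv : u ≤ v) : A *ᵥ u ≤ A *ᵥ v :=
  fun i => dotProduct_le_dotProduct_of_nonneg_left huv (hA i)

theorem mulVec_apply_lt (hA : ∀ i j, 0 ≤ A i j) (hA1 : A *ᵥ 1 ≤ 1) {w : n → ℝ} {c : ℝ}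
    (hc : 0 ≤ c) (hw : ∀ q, w q ≤ c) {i j : n} (hij : 0 < A i j) (hj : w j < c) :
    (A *ᵥ w) i < c :=
  calc (A *ᵥ w) i = ∑ q, A i q * w q := rfl
    _ < ∑ q, A i q * c :=
      sum_lt_sum (fun q _ => mul_le_mul_of_nonneg_left (hw q) (hA i q))
        ⟨j, mem_univ j, mul_lt_mul_of_pos_left hj hij⟩
    _ = (A *ᵥ 1) i * c := by simp [mulVec, dotProduct, sum_mul]
    _ ≤ c := mul_le_of_le_one_left hc (hA1 i)

theorem le_mulVec_norm_of_mulVec_eq (hA : ∀ i j, 0 ≤ A i j) {v : n → ℂ}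
    (hv : A.map (Complex.ofReal ·) *ᵥ v = v) : (‖v ·‖) ≤ A *ᵥ (‖v ·‖) := fun i =>
  calc ‖v i‖ = ‖∑ j, (A i j : ℂ) * v j‖ := by rw [← congrFun hv i]; rfl
    _ ≤ ∑ j, ‖(A i j : ℂ) * v j‖ := norm_sum_le _ _
    _ = (A *ᵥ (‖v ·‖)) i := by simp [mulVec, dotProduct, abs_of_nonneg (hA _ _)]

variable [DecidableEq n]

theorem mem_spectrum_iff_exists_mulVec_eq_smul {K : Type*} [Field K] {B : Matrix n n K}
    {z : K} : z ∈ spectrum K B ↔ ∃ v ≠ 0, B *ᵥ v = z • v := by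
  rw [← spectrum_toLin', ← Module.End.hasEigenvalue_iff_mem_spectrum]
  refine ⟨fun hz => ?_, fun ⟨v, hv0, hv⟩ => ?_⟩
  · obtain ⟨v, hv, hv0⟩ := hz.exists_hasEigenvector
    exact ⟨v, hv0, Module.End.mem_eigenspace_iff.mp hv⟩
  · exact Module.End.hasEigenvalue_of_hasEigenvector
      ⟨Module.End.mem_eigenspace_iff.mpr hv, hv0⟩

theorem one_mem_spectrum_of_mulVec_one_eq_one [Nonempty n] (hA1 : A *ᵥ 1 = 1) :
    (1 : ℂ) ∈ spectrum ℂ (A.map (Complex.ofReal ·)) := by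
  refine mem_spectrum_iff_exists_mulVec_eq_smul.2 ⟨1, one_ne_zero, funext fun i => ?_⟩
  simpa [mulVec, dotProduct] using congrArg Complex.ofReal (congrFun hA1 i)

theorem norm_le_one_of_mem_spectrum (hA : ∀ i j, 0 ≤ A i j) (hA1 : A *ᵥ 1 ≤ 1) {z : ℂ}
    (hz : z ∈ spectrum ℂ (A.map (Complex.ofReal ·))) : ‖z‖ ≤ 1 := by
  rw [← spectrum_toLin', ← Module.End.hasEigenvalue_iff_mem_spectrum] at hz
  obtain ⟨k, hk⟩ := eigenvalue_mem_ball hz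
  calc ‖z‖ ≤ ‖(A k k : ℂ)‖ + ‖z - A k k‖ := norm_le_norm_add_norm_sub' _ _
    _ ≤ ‖(A k k : ℂ)‖ + ∑ j ∈ univ.erase k, ‖(A k j : ℂ)‖ := by
      gcongr; simpa [dist_eq_norm] using hk
    _ = (A *ᵥ 1) k := by
      rw [add_sum_erase _ (fun j => ‖(A k j : ℂ)‖) (mem_univ k)]
      simp [mulVec, dotProduct, abs_of_nonneg (hA _ _)]
    _ ≤ 1 := hA1 k

theorem pow_mulVec_one_le_one (hA : ∀ i j, 0 ≤ A i j) (hA1 : A *ᵥ 1 ≤ 1) (m : ℕ) :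
    A ^ m *ᵥ 1 ≤ 1 := by
  induction m with
  | zero => simp
  | succ m ih =>
    rw [pow_succ', ← mulVec_mulVec]
    exact (mulVec_mono hA ih).trans hA1

theorem le_pow_mulVec_of_le_mulVec (hA : ∀ i j, 0 ≤ A i j) {w : n → ℝ} (hw : w ≤ A *ᵥ w)
    (m : ℕ) : w ≤ A ^ m *ᵥ w := by
  induction m with
  | zero => simp
  | succ m ih =>
    rw [pow_succ', ← mulVec_mulVec]
    exact hw.trans (mulVec_mono hA ih)

theorem isIrreducible_of_forall_pos (hA : ∀ i j, 0 < A i j) : A.IsIrreducible :=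
  (isIrreducible_iff_exists_pow_pos fun i j => (hA i j).le).2
    fun i j => ⟨1, one_pos, by simpa using hA i j⟩

theorem IsIrreducible.apply_eq_of_le_mulVec (hA : A.IsIrreducible) (hA1 : A *ᵥ 1 ≤ 1)
    {w : n → ℝ} (hw0 : 0 ≤ w) (hw : w ≤ A *ᵥ w) {i : n} (hi : ∀ q, w q ≤ w i) (j : n) :
    w j = w i := by
  refine (hi j).antisymm (not_lt.1 fun hj => ?_)
  obtain ⟨m, -, hm⟩ := (isIrreducible_iff_exists_pow_pos hA.nonneg).1 hA i j
  exact (le_pow_mulVec_of_le_mulVec hA.nonneg hw m i).not_gt <|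
    mulVec_apply_lt (pow_apply_nonneg hA.nonneg m) (pow_mulVec_one_le_one hA.nonneg hA1 m)
      (hw0 i) hi hm hj

theorem IsIrreducible.mulVec_one_eq_one_of_one_mem_spectrum (hA : A.IsIrreducible)
    (hA1 : A *ᵥ 1 ≤ 1) (h1 : (1 : ℂ) ∈ spectrum ℂ (A.map (Complex.ofReal ·))) :
    A *ᵥ 1 = 1 := by
  obtain ⟨v, hv0, hv⟩ := mem_spectrum_iff_exists_mulVec_eq_smul.1 h1
  rw [one_smul] at hv
  obtain ⟨p, hp⟩ := Function.ne_iff.1 hv0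
  obtain ⟨i, -, hi⟩ := exists_max_image univ (‖v ·‖) ⟨p, mem_univ p⟩
  have hw := le_mulVec_norm_of_mulVec_eq hA.nonneg hv
  have hconst : (‖v ·‖) = ‖v i‖ • 1 := funext fun j => by
    simpa using hA.apply_eq_of_le_mulVec hA1 (fun _ => norm_nonneg _) hw
      (fun q => hi q (mem_univ q)) j
  have hvi : 0 < ‖v i‖ := (norm_pos_iff.2 hp).trans_le (hi p (mem_univ p))
  refine hA1.antisymm fun j => le_of_mul_le_mul_right ?_ hvi
  have hj := hw j
  rw [hconst, mulVec_smul] at hj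
  simpa [mul_comm] using hj

end Nonneg

section Submatrix

variable {ι : Type*} [Fintype ι] {R : Matrix ι ι ℝ} {s : ι → Prop} [DecidablePred s]

theorem submatrix_mulVec_one_le_one (hR : ∀ i j, 0 ≤ R i j) (hR1 : ∀ i, ∑ j, R i j = 1) :
    (R.submatrix (↑) (↑) : Matrix (Subtype s) (Subtype s) ℝ) *ᵥ 1 ≤ 1 := fun p => by
  have hsplit := Fintype.sum_subtype_add_sum_subtype s (R p)
  have hrest : 0 ≤ ∑ j : {j // ¬ s j}, R p j := sum_nonneg fun j _ => hR p j
  simp only [mulVec, dotProduct, submatrix_apply, Pi.one_apply, mul_one]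
  linarith [hR1 p]

theorem submatrix_mulVec_one_eq_one_iff (hR : ∀ i j, 0 ≤ R i j) (hR1 : ∀ i, ∑ j, R i j = 1) :
    (R.submatrix (↑) (↑) : Matrix (Subtype s) (Subtype s) ℝ) *ᵥ 1 = 1 ↔
      ∀ i, s i → ∀ j, ¬ s j → R i j = 0 := by
  simp only [funext_iff, Subtype.forall, mulVec, dotProduct, submatrix_apply, Pi.one_apply,
    mul_one]
  refine forall₂_congr fun i _ => ?_
  rw [← hR1 i]
  exact sum_subtype_eq_sum_iff_of_nonneg (hR i) s

theorem exists_ne_zero_of_closed (hR : ∀ i j, 0 ≤ R i j) (hR1 : ∀ i, ∑ j, R i j = 1)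
    (hclosed : ∀ i, s i → ∀ j, ¬ s j → R i j = 0) {i : ι} (hi : s i) : ∃ j, s j ∧ R i j ≠ 0 := by
  by_contra! h
  have hrow := congrFun ((submatrix_mulVec_one_eq_one_iff hR hR1).2 hclosed) ⟨i, hi⟩
  simp only [mulVec, dotProduct, submatrix_apply, Pi.one_apply, mul_one] at hrow
  rw [sum_eq_zero fun (q : Subtype s) _ => h q q.2] at hrow
  exact zero_ne_one hrow

variable [DecidableEq ι]

theorem one_mem_spectrum_submatrix [Nonempty (Subtype s)] (hR : ∀ i j, 0 ≤ R i j)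
    (hR1 : ∀ i, ∑ j, R i j = 1) (hclosed : ∀ i, s i → ∀ j, ¬ s j → R i j = 0) :
    (1 : ℂ) ∈ spectrum ℂ
      ((R.submatrix (↑) (↑) : Matrix (Subtype s) (Subtype s) ℝ).map (Complex.ofReal ·)) :=
  one_mem_spectrum_of_mulVec_one_eq_one ((submatrix_mulVec_one_eq_one_iff hR hR1).2 hclosed)

theorem le_one_of_mem_spectrum_submatrix (hR : ∀ i j, 0 ≤ R i j) (hR1 : ∀ i, ∑ j, R i j = 1)
    {μ : ℝ} (hμ : (μ : ℂ) ∈ spectrum ℂ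
      ((R.submatrix (↑) (↑) : Matrix (Subtype s) (Subtype s) ℝ).map (Complex.ofReal ·))) :
    μ ≤ 1 := by
  have := norm_le_one_of_mem_spectrum (fun p q : Subtype s => hR p q)
    (submatrix_mulVec_one_le_one hR hR1) hμ
  exact (le_abs_self μ).trans (by simpa using this)

theorem eq_zero_of_one_mem_spectrum_submatrix (hR : ∀ i j, 0 ≤ R i j)
    (hR1 : ∀ i, ∑ j, R i j = 1)
    (hirr : (R.submatrix (↑) (↑) : Matrix (Subtype s) (Subtype s) ℝ).IsIrreducible)
    (h1 : (1 : ℂ) ∈ spectrum ℂ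
      ((R.submatrix (↑) (↑) : Matrix (Subtype s) (Subtype s) ℝ).map (Complex.ofReal ·)))
    {i : ι} (hi : s i) {j : ι} (hj : ¬ s j) : R i j = 0 :=
  (submatrix_mulVec_one_eq_one_iff hR hR1).1
    (hirr.mulVec_one_eq_one_of_one_mem_spectrum (submatrix_mulVec_one_le_one hR hR1) h1) i hi j hj

end Submatrix

theorem eq_zero_of_closed_block {ι κ M : Type*} [LinearOrder κ] [WellFoundedLT κ] [Zero M]
    {R : Matrix ι ι M} {b : ι → κ} {k u : κ} (hclosed : ∀ i, b i = k → ∀ j, b j ≠ k → R i j = 0)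
    (hfed : ∀ m, k < m → m < u → ∃ i j, k ≤ b i ∧ b i < m ∧ b j = m ∧ R i j ≠ 0)
    {i j : ι} (hki : k ≤ b i) (hiu : b i < u) (hju : b j = u) : R i j = 0 := by
  suffices ∀ m ≤ u, ∀ i j, k ≤ b i → b i < m → b j = m → R i j = 0 from
    this u le_rfl i j hki hiu hju
  intro m
  induction m using WellFoundedLT.induction with
  | _ m ih =>
    intro hmu i j hki him hjm
    rcases hki.eq_or_lt with hki | hki
    · exact hclosed i hki.symm j (hjm ▸ hki ▸ him).ne'
    · by_contra hR
      obtain ⟨i', j', hki', hi'j, hj', hR'⟩ := hfed (b i) hki (him.trans_le hmu)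
      exact hR' (ih (b i) (hjm ▸ him) (him.le.trans hmu) i' j' hki' hi'j hj')

end Matrix

theorem eq_castSucc_of_le_of_lt {J K : ℕ} {ι : Fin (J + 1) → Fin (K + 1)} (hι : StrictMono ι)
    {cl : Fin (K + 1) → Fin (J + 1)} (hcl1 : ∀ k, ι (cl k) ≤ k)
    (hcl2 : ∀ k j, ι j ≤ k → j ≤ cl k) {j : Fin J} {m : Fin (K + 1)}
    (hjm : ι j.castSucc ≤ m) (hm : m < ι j.succ) : cl m = j.castSucc :=
  le_antisymm (Fin.le_castSucc_iff.2 (hι.lt_iff_lt.1 ((hcl1 m).trans_lt hm))) (hcl2 m _ hjm)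

theorem character_one_only_last_block_general
    (D K J : ℕ) (R : Matrix (Fin D) (Fin D) ℝ)
    (b : Fin D → Fin (K + 1)) (hbsurj : Function.Surjective b)
    (hRpos : ∀ i j, 0 ≤ R i j) (hRrow : ∀ i, ∑ j, R i j = 1)
    (hRblock : ∀ i j, b j < b i → R i j = 0)
    (μc : Fin (K + 1) → ℝ)
    -- each diagonal block is either zero (character 0) or irreducible with
    -- Perron-Frobenius eigenvalue `μc k`
    (hchar : ∀ k : Fin (K + 1),
      ((∀ i j, b i = k → b j = k → R i j = 0) ∧ μc k = 0) ∨
      ((∀ x y : {i // b i = k}, ∃ n : ℕ, 0 < n ∧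
          0 < (((fun p q : {i // b i = k} => R p.1 q.1) :
            Matrix {i // b i = k} {i // b i = k} ℝ) ^ n) x y) ∧
        (μc k : ℂ) ∈ spectrum ℂ
          ((Matrix.of fun p q : {i // b i = k} => R p.1 q.1).map (Complex.ofReal ·)) ∧
        ∀ z ∈ spectrum ℂ
          ((Matrix.of fun p q : {i // b i = k} => R p.1 q.1).map (Complex.ofReal ·)),
          ‖z‖ ≤ μc k))
    -- leading blocks and clusters: indices of running maxima of the characters
    (ι : Fin (J + 1) → Fin (K + 1)) (hι : StrictMono ι)
    (cl : Fin (K + 1) → Fin (J + 1))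
    (hcl1 : ∀ k, ι (cl k) ≤ k) (hcl2 : ∀ k j, ι j ≤ k → j ≤ cl k)
    (hmono : Monotone fun j => μc (ι j))
    (hrun : ∀ k, ι (cl k) ≠ k → μc k < μc (ι (cl k)))
    -- increasing order, condition (2)
    (hinc2 : ∀ k, ι (cl k) ≠ k →
      ∃ i j, ι (cl k) ≤ b i ∧ b i < k ∧ b j = k ∧ R i j ≠ 0)
    -- assumption (A)
    (hA : ∀ j : Fin (J + 1), 0 < μc (ι j) →
      0 < ((univ.filter fun j' : Fin (J + 1) =>
        j' < j ∧ μc (ι j') = μc (ι j)).card) →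
      ∃ jp : Fin (J + 1), (jp : ℕ) + 1 = (j : ℕ) ∧
        ∃ i i', ι jp ≤ b i ∧ b i < ι j ∧ b i' = ι j ∧ R i i' ≠ 0) :
    μc (Fin.last K) = 1 ∧
      (∀ k : Fin (K + 1), μc k = 1 → k = Fin.last K) ∧
      ι (Fin.last J) = Fin.last K := by
  have hle (k : Fin (K + 1)) : μc k ≤ 1 := by
    rcases hchar k with ⟨-, h0⟩ | ⟨-, hmem, -⟩
    exacts [h0 ▸ zero_le_one, le_one_of_mem_spectrum_submatrix hRpos hRrow hmem]
  have hclosed (k : Fin (K + 1)) (hk : μc k = 1) (i : Fin D) (hi : b i = k) (j : Fin D)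
      (hj : b j ≠ k) : R i j = 0 := by
    rcases hchar k with ⟨-, h0⟩ | ⟨hpow, hmem, -⟩
    · exact absurd (h0 ▸ hk) zero_ne_one
    -- the power in `hchar` is the entrywise power of functions: the block is positive
    have hpos (p q : {i // b i = k}) : 0 < R p q := by
      obtain ⟨n, hn, hpn⟩ := hpow p q
      exact lt_of_pow_lt_pow_left₀ n (hRpos p q) (by rwa [zero_pow hn.ne'])
    rw [hk, Complex.ofReal_one] at hmem
    exact eq_zero_of_one_mem_spectrum_submatrix hRpos hRrow (isIrreducible_of_forall_pos hpos)
      hmem hi hj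
  have hlast : μc (Fin.last K) = 1 := by
    obtain ⟨i₀, hi₀⟩ := hbsurj (Fin.last K)
    have : Nonempty {i // b i = Fin.last K} := ⟨⟨i₀, hi₀⟩⟩
    have hclosed_last (i : Fin D) (hi : b i = Fin.last K) (j : Fin D) (hj : b j ≠ Fin.last K) :
        R i j = 0 := hRblock i j (hi ▸ (Fin.le_last _).lt_of_ne hj)
    rcases hchar (Fin.last K) with ⟨hzero, -⟩ | ⟨-, -, hmax⟩
    · obtain ⟨j, hj, hR⟩ := exists_ne_zero_of_closed hRpos hRrow hclosed_last hi₀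
      exact absurd (hzero i₀ j hi₀ hj) hR
    · exact (hle _).antisymm
        (by simpa using hmax 1 (one_mem_spectrum_submatrix hRpos hRrow hclosed_last))
  have hleading (k : Fin (K + 1)) (hk : μc k = 1) : ι (cl k) = k := by
    by_contra h
    exact (hrun k h).not_ge (hk ▸ hle _)
  have hιlast : ι (Fin.last J) = Fin.last K := by
    simpa [Fin.last_le_iff.1 (hcl2 _ _ (Fin.le_last _))] using hleading _ hlast
  refine ⟨hlast, fun k hk => ?_, hιlast⟩
  by_contra hk_last
  obtain ⟨j, hj⟩ : ∃ j : Fin J, j.castSucc = cl k := Fin.exists_castSucc_eq.2 fun h =>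
    hk_last (by rw [← hleading k hk, h, hιlast])
  rw [← hleading k hk, ← hj] at hk
  have hnext : μc (ι j.succ) = 1 := (hle _).antisymm (hk ▸ hmono Fin.castSucc_lt_succ.le)
  obtain ⟨jp, hjp, i, i', hi, hii, hi', hR⟩ := hA j.succ (by linarith)
    (card_pos.2 ⟨j.castSucc, by simp [hnext, hk]⟩)
  obtain rfl : jp = j.castSucc := Fin.ext (by simpa using hjp)
  refine hR (eq_zero_of_closed_block (hclosed _ hk) (fun m hkm hm => ?_) hi hii hi')
  have hcl := eq_castSucc_of_le_of_lt hι hcl1 hcl2 hkm.le hm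
  simpa [hcl] using hinc2 m (hcl ▸ hkm.ne)

/-- For a balanced nonnegative block upper triangular matrix in increasing order
satisfying assumption (A), the only diagonal block with character (Perron–Frobenius
eigenvalue) `1` is the final block `Q_{K+1}`, which forms the last cluster by
itself. -/
theorem character_one_only_last_block
    (D K J : ℕ) (R : Matrix (Fin D) (Fin D) ℝ)
    (b : Fin D → Fin (K + 1)) (hb : Monotone b) (hbsurj : Function.Surjective b)
    (hRpos : ∀ i j, 0 ≤ R i j) (hRrow : ∀ i, ∑ j, R i j = 1)
    (hRblock : ∀ i j, b j < b i → R i j = 0)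
    (μc : Fin (K + 1) → ℝ)
    -- each diagonal block is either zero (character 0) or irreducible with
    -- Perron-Frobenius eigenvalue `μc k`
    (hchar : ∀ k : Fin (K + 1),
      ((∀ i j, b i = k → b j = k → R i j = 0) ∧ μc k = 0) ∨
      ((∀ x y : {i // b i = k}, ∃ n : ℕ, 0 < n ∧
          0 < (((fun p q : {i // b i = k} => R p.1 q.1) :
            Matrix {i // b i = k} {i // b i = k} ℝ) ^ n) x y) ∧
        (μc k : ℂ) ∈ spectrum ℂ
          ((Matrix.of fun p q : {i // b i = k} => R p.1 q.1).map (Complex.ofReal ·)) ∧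
        ∀ z ∈ spectrum ℂ
          ((Matrix.of fun p q : {i // b i = k} => R p.1 q.1).map (Complex.ofReal ·)),
          ‖z‖ ≤ μc k))
    -- leading blocks and clusters: indices of running maxima of the characters
    (ι : Fin (J + 1) → Fin (K + 1)) (hι : StrictMono ι)
    (cl : Fin (K + 1) → Fin (J + 1))
    (hcl1 : ∀ k, ι (cl k) ≤ k) (hcl2 : ∀ k j, ι j ≤ k → j ≤ cl k)
    (hmono : Monotone fun j => μc (ι j))
    (hrun : ∀ k, ι (cl k) ≠ k → μc k < μc (ι (cl k)))
    -- increasing order, condition (1): non-leading zero diagonal blocks are scalar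
    (hinc1 : ∀ k, ι (cl k) ≠ k → (∀ i j, b i = k → b j = k → R i j = 0) →
      (univ.filter fun i => b i = k).card = 1)
    -- increasing order, condition (2)
    (hinc2 : ∀ k, ι (cl k) ≠ k →
      ∃ i j, ι (cl k) ≤ b i ∧ b i < k ∧ b j = k ∧ R i j ≠ 0)
    -- increasing order, condition (3)
    (hinc3 : ∀ j : Fin (J + 1), μc (ι j) = 0 →
      0 < ((univ.filter fun j' : Fin (J + 1) =>
        j' < j ∧ μc (ι j') = μc (ι j)).card) →
      ∀ i', b i' = ι j → ∃ m : Fin (K + 1), (m : ℕ) + 1 = (ι j : ℕ) ∧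
        ∃ i, b i = m ∧ 0 < R i i')
    -- assumption (A)
    (hA : ∀ j : Fin (J + 1), 0 < μc (ι j) →
      0 < ((univ.filter fun j' : Fin (J + 1) =>
        j' < j ∧ μc (ι j') = μc (ι j)).card) →
      ∃ jp : Fin (J + 1), (jp : ℕ) + 1 = (j : ℕ) ∧
        ∃ i i', ι jp ≤ b i ∧ b i < ι j ∧ b i' = ι j ∧ R i i' ≠ 0) :
    μc (Fin.last K) = 1 ∧
      (∀ k : Fin (K + 1), μc k = 1 → k = Fin.last K) ∧
      ι (Fin.last J) = Fin.last K :=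
  character_one_only_last_block_general D K J R b hbsurj hRpos hRrow hRblock μc hchar ι hι cl hcl1
    hcl2 hmono hrun hinc2 hA
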